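/- Fix a nonzero real number λ and let Y be a standard normal random variable. Then for every integer n≥0, E[(Y)_{n,λ}] = Σ_{k=0}^{⌊n/2⌋} Σ_{m=2k}^{n} ((2k)!/(2^k k!)) S_1(m,2k) {n brace m}_λ. -/

import Mathlib

open MeasureTheory Finset

noncomputable section

/-- The degenerate falling factorial `(x)_{n,λ} = x(x-λ)⋯(x-(n-1)λ)`. -/
def dff (lam x : ℝ) (n : ℕ) : ℝ := ∏ i ∈ Finset.range n, (x - i * lam)

/-- The degenerate rising factorial `⟨x⟩_{n,λ} = x(x+λ)⋯(x+(n-1)λ)`. -/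
def drf (lam x : ℝ) (n : ℕ) : ℝ := ∏ i ∈ Finset.range n, (x + i * lam)

/-- The ordinary falling factorial `(x)_n = x(x-1)⋯(x-n+1)`. -/
def ffall (x : ℝ) (n : ℕ) : ℝ := ∏ i ∈ Finset.range n, (x - i)

/-- The ordinary rising factorial `⟨x⟩_n = x(x+1)⋯(x+n-1)`. -/
def frise (x : ℝ) (n : ℕ) : ℝ := ∏ i ∈ Finset.range n, (x + i)

/-- Composition `f ∘ g` of formal power series, valid when `g` has zero constant term. -/
def pscomp (f g : PowerSeries ℝ) : PowerSeries ℝ :=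
  PowerSeries.mk fun n =>
    ∑ k ∈ Finset.range (n + 1), PowerSeries.coeff k f * PowerSeries.coeff n (g ^ k)

/-- The degenerate moment generating series `F_Y = Σ_{n≥0} E[(Y)_{n,λ}] X^n/n!`. -/
def momSeries (lam : ℝ) {Ω : Type*} [MeasurableSpace Ω] (μ : Measure Ω) (Y : Ω → ℝ) :
    PowerSeries ℝ :=
  PowerSeries.mk fun n => (∫ ω, dff lam (Y ω) n ∂μ) / (n.factorial : ℝ)

/-- Taylor series at `u = 0` of the degenerate logarithm `log_λ(1+u)`:
`Σ_{n≥1} λ^{n-1} (1)_{n,1/λ} u^n/n!`. -/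
def degLogSeries (lam : ℝ) : PowerSeries ℝ :=
  PowerSeries.mk fun n => if n = 0 then 0 else lam ^ (n - 1) * dff (1 / lam) 1 n / (n.factorial : ℝ)

/-- `G_Y`, the degenerate cumulant generating series `log_{-λ}(F_Y)`, i.e. the substitution of
`F_Y - 1` into the Taylor series of `log_{-λ}(1+u)`. -/
def cumSeries (lam : ℝ) {Ω : Type*} [MeasurableSpace Ω] (μ : Measure Ω) (Y : Ω → ℝ) :
    PowerSeries ℝ :=
  pscomp (degLogSeries (-lam)) (momSeries lam μ Y - 1)

/-- The degenerate cumulants `κ_{n,λ}(Y) := n!·(coefficient of X^n in G_Y)`. -/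
def degCumulant (lam : ℝ) {Ω : Type*} [MeasurableSpace Ω] (μ : Measure Ω) (Y : Ω → ℝ)
    (n : ℕ) : ℝ :=
  (n.factorial : ℝ) * PowerSeries.coeff n (cumSeries lam μ Y)

/-- The probabilistic degenerate Stirling numbers of the second kind
`{n brace k}_{Y,λ} := n!·(coefficient of X^n in (F_Y - 1)^k/k!)`. -/
def braceY (lam : ℝ) {Ω : Type*} [MeasurableSpace Ω] (μ : Measure Ω) (Y : Ω → ℝ)
    (n k : ℕ) : ℝ :=
  (n.factorial : ℝ) * PowerSeries.coeff n ((momSeries lam μ Y - 1) ^ k) / (k.factorial : ℝ)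

/-- The probabilistic degenerate Stirling numbers of the first kind, defined by
`(-1)^{n-k} S_{1,λ}^Y(n,k) := n!·(coefficient of X^n in G_Y^k/k!)`. -/
def S1Y (lam : ℝ) {Ω : Type*} [MeasurableSpace Ω] (μ : Measure Ω) (Y : Ω → ℝ)
    (n k : ℕ) : ℝ :=
  (-1 : ℝ) ^ (n - k) * ((n.factorial : ℝ) * PowerSeries.coeff n ((cumSeries lam μ Y) ^ k) / (k.factorial : ℝ))

/-- Taylor series of `log(1+u)`: `Σ_{n≥1} (-1)^{n-1} u^n/n`. -/
def logSeries : PowerSeries ℝ :=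
  PowerSeries.mk fun n => if n = 0 then 0 else (-1 : ℝ) ^ (n - 1) / n

/-- `F^x := exp (x · Log F)` for a power series `F` with constant term `1`. -/
def psPow (F : PowerSeries ℝ) (x : ℝ) : PowerSeries ℝ :=
  pscomp (PowerSeries.exp ℝ) (PowerSeries.C (R := ℝ) x * pscomp logSeries (F - 1))

/-- `F ↦ F/X`, i.e. the shift sending `Σ a_{n+1} X^{n+1}` (with `a_0 = 0`) to `Σ a_{n+1} X^n`. -/
def shiftDown (F : PowerSeries ℝ) : PowerSeries ℝ :=
  PowerSeries.mk fun n => PowerSeries.coeff (n + 1) F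

/-- The probabilistic degenerate Bernoulli polynomials associated with `Y`:
`Σ_{n≥0} β_{n,λ}^Y(x) X^n/n! = (X/(F_Y-1))·F_Y^x`. -/
def probBernoulli (lam : ℝ) {Ω : Type*} [MeasurableSpace Ω] (μ : Measure Ω) (Y : Ω → ℝ)
    (n : ℕ) (x : ℝ) : ℝ :=
  (n.factorial : ℝ) *
    PowerSeries.coeff n ((shiftDown (momSeries lam μ Y - 1))⁻¹ * psPow (momSeries lam μ Y) x)

/-- The probabilistic degenerate Euler polynomials associated with `Y`:
`Σ_{n≥0} 𝓔_{n,λ}^Y(x) X^n/n! = (2/(F_Y+1))·F_Y^x`. -/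
def probEuler (lam : ℝ) {Ω : Type*} [MeasurableSpace Ω] (μ : Measure Ω) (Y : Ω → ℝ)
    (n : ℕ) (x : ℝ) : ℝ :=
  (n.factorial : ℝ) *
    PowerSeries.coeff n
      (PowerSeries.C (R := ℝ) 2 * (momSeries lam μ Y + 1)⁻¹ * psPow (momSeries lam μ Y) x)

open Real ProbabilityTheory
open scoped NNReal Nat

/-! Integrating by parts against the Gaussian density, whose derivative is `-((x - μ) / v)` times
itself, gives the recursion `m_{j+2} = μ m_{j+1} + v (j + 1) m_j` for the moments `m_j` of
`N(μ, v)`. For a centred Gaussian this yields `m_{2k+1} = 0` and `m_{2k} = v^k (2k)! / (2^k k!)`.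
The theorem follows by expanding `(x)_{n,λ}` in falling factorials and these in powers of `x`,
integrating term by term and interchanging the two sums. -/

lemma hasDerivAt_gaussianPDFReal (μ : ℝ) (v : ℝ≥0) (x : ℝ) :
    HasDerivAt (gaussianPDFReal μ v) (-((x - μ) / v) * gaussianPDFReal μ v x) x := by
  have hsq : HasDerivAt (fun x => (x - μ) ^ 2) (2 * (x - μ)) x := by
    simpa using ((hasDerivAt_id x).sub_const μ).fun_pow 2
  have hexp : HasDerivAt (fun x => -(x - μ) ^ 2 / (2 * (v : ℝ))) (-((x - μ) / v)) x :=
    (hsq.neg.div_const _).congr_deriv (by ring)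
  exact (hexp.exp.const_mul _).congr_deriv (by rw [gaussianPDFReal]; ring)

lemma integrable_pow_gaussianReal (μ : ℝ) (v : ℝ≥0) (j : ℕ) :
    Integrable (fun x => x ^ j) (gaussianReal μ v) :=
  (memLp_id_gaussianReal (μ := μ) (v := v) j).integrable_norm_pow' |>.mono'
    (by fun_prop) (by simp)

lemma integrable_gaussianPDFReal_mul_pow (μ : ℝ) (v : ℝ≥0) (j : ℕ) :
    Integrable (fun x => gaussianPDFReal μ v x * x ^ j) := by
  rcases eq_or_ne v 0 with rfl | hv
  · simp
  have := integrable_pow_gaussianReal μ v j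
  rw [gaussianReal_of_var_ne_zero _ hv,
    integrable_withDensity_iff_integrable_smul' (measurable_gaussianPDF μ v)
      (Filter.Eventually.of_forall fun _ => gaussianPDF_lt_top)] at this
  simpa using this

lemma integral_pow_add_two_gaussianReal (μ : ℝ) (v : ℝ≥0) (j : ℕ) :
    ∫ x, x ^ (j + 2) ∂gaussianReal μ v =
      μ * ∫ x, x ^ (j + 1) ∂gaussianReal μ v + v * (j + 1) * ∫ x, x ^ j ∂gaussianReal μ v := by
  rcases eq_or_ne v 0 with rfl | hv
  · simp [gaussianReal_zero_var]
    ring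
  have hv' : (v : ℝ) ≠ 0 := by exact_mod_cast hv
  have hI := integrable_gaussianPDFReal_mul_pow μ v
  have hpow (x : ℝ) : HasDerivAt (fun x => x ^ (j + 1)) ((j + 1) * x ^ j) x := by
    simpa using hasDerivAt_pow (j + 1) x
  have ibp := integral_mul_deriv_eq_deriv_mul_of_integrable (fun x _ => hpow x)
    (fun x _ => hasDerivAt_gaussianPDFReal μ v x)
    ((((hI (j + 2)).sub ((hI (j + 1)).const_mul μ)).const_mul (-(v : ℝ)⁻¹)).congr <|
      .of_forall fun x => by simp only [Pi.mul_apply, Pi.sub_apply]; field_simp; ring)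
    (((hI j).const_mul (j + 1)).congr <| .of_forall fun x => by simp only [Pi.mul_apply]; ring)
    ((hI (j + 1)).congr <| .of_forall fun x => mul_comm _ _)
  simp only [integral_gaussianReal_eq_integral_smul hv, smul_eq_mul]
  have lhs : ∫ x, x ^ (j + 1) * (-((x - μ) / v) * gaussianPDFReal μ v x) =
      -(v : ℝ)⁻¹ * ((∫ x, gaussianPDFReal μ v x * x ^ (j + 2)) -
        μ * ∫ x, gaussianPDFReal μ v x * x ^ (j + 1)) := by
    rw [← integral_const_mul, ← integral_sub (hI _) ((hI _).const_mul μ), ← integral_const_mul]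
    congr 1 with x
    field_simp
    ring
  have rhs : ∫ x, (j + 1) * x ^ j * gaussianPDFReal μ v x =
      (j + 1) * ∫ x, gaussianPDFReal μ v x * x ^ j := by
    rw [← integral_const_mul]
    congr 1 with x
    ring
  rw [lhs, rhs] at ibp
  field_simp at ibp
  linarith

lemma integral_pow_two_mul_add_one_gaussianReal (v : ℝ≥0) (k : ℕ) :
    ∫ x, x ^ (2 * k + 1) ∂gaussianReal 0 v = 0 := by
  induction k with
  | zero => simp [integral_id_gaussianReal]
  | succ k ih =>
    rw [show 2 * (k + 1) + 1 = 2 * k + 1 + 2 by ring, integral_pow_add_two_gaussianReal, ih]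
    simp

lemma integral_pow_two_mul_gaussianReal (v : ℝ≥0) (k : ℕ) :
    ∫ x, x ^ (2 * k) ∂gaussianReal 0 v = v ^ k * (2 * k)! / (2 ^ k * k !) := by
  induction k with
  | zero => simp
  | succ k ih =>
    rw [show 2 * (k + 1) = 2 * k + 2 by ring, integral_pow_add_two_gaussianReal, ih,
      Nat.factorial_succ, Nat.factorial_succ, Nat.factorial_succ]
    push_cast
    field_simp
    ring

lemma Finset.sum_range_succ_eq_sum_even_of_odd_eq_zero {M : Type*} [AddCommMonoid M] {f : ℕ → M}
    (hf : ∀ k, f (2 * k + 1) = 0) (n : ℕ) :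
    ∑ j ∈ range (n + 1), f j = ∑ k ∈ range (n / 2 + 1), f (2 * k) := by
  rw [← sum_image (g := (2 * ·)) (by intro a _ b _ h; simpa using h)]
  symm
  refine sum_subset (fun j hj => ?_) (fun j hj hj' => ?_)
  · obtain ⟨k, hk, rfl⟩ := mem_image.mp hj
    simp only [mem_range] at hk ⊢
    omega
  · obtain ⟨k, rfl | rfl⟩ := Nat.even_or_odd' j
    · exact absurd (mem_image.mpr ⟨k, by simp at hj ⊢; omega, rfl⟩) hj'
    · exact hf k

lemma integrable_sum_mul_pow_gaussianReal (μ : ℝ) (v : ℝ≥0) (s : Finset ℕ) (c : ℕ → ℝ) :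
    Integrable (fun x => ∑ j ∈ s, c j * x ^ j) (gaussianReal μ v) :=
  integrable_finsetSum _ fun j _ => (integrable_pow_gaussianReal μ v j).const_mul (c j)

lemma integral_sum_mul_pow_gaussianReal (v : ℝ≥0) (c : ℕ → ℝ) (n : ℕ) :
    ∫ x, ∑ j ∈ range (n + 1), c j * x ^ j ∂gaussianReal 0 v =
      ∑ k ∈ range (n / 2 + 1), c (2 * k) * (v ^ k * (2 * k)! / (2 ^ k * k !)) := by
  rw [integral_finsetSum _ fun j _ => (integrable_pow_gaussianReal 0 v j).const_mul (c j)]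
  simp_rw [integral_const_mul]
  rw [sum_range_succ_eq_sum_even_of_odd_eq_zero fun k => by
    simp [integral_pow_two_mul_add_one_gaussianReal]]
  simp_rw [integral_pow_two_mul_gaussianReal]

theorem gaussian_moment_eq_sum_general {Ω : Type*} [MeasurableSpace Ω] (μ : MeasureTheory.Measure Ω)
    (Y : Ω → ℝ) (hY : Measurable Y)
    (hYlaw : μ.map Y = ProbabilityTheory.gaussianReal 0 1)
    (lam : ℝ)
    (S1 : ℕ → ℕ → ℝ)
    (hS1 : ∀ (x : ℝ) (n : ℕ), ffall x n = ∑ k ∈ Finset.range (n + 1), S1 n k * x ^ k)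
    (St2 : ℕ → ℕ → ℝ)
    (hSt2 : ∀ (x : ℝ) (n : ℕ),
      dff lam x n = ∑ k ∈ Finset.range (n + 1), St2 n k * ffall x k)
    (n : ℕ) :
    (∫ ω, dff lam (Y ω) n ∂μ) =
      ∑ k ∈ Finset.range (n / 2 + 1), ∑ m ∈ Finset.Icc (2 * k) n,
        ((2 * k).factorial : ℝ) / (2 ^ k * (k.factorial : ℝ)) * S1 m (2 * k) * St2 n m := by
  have hffall (m : ℕ) : (fun x => ffall x m) = fun x => ∑ k ∈ range (m + 1), S1 m k * x ^ k :=
    funext fun x => hS1 x m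
  have hint (m : ℕ) : Integrable (fun x => ffall x m) (gaussianReal 0 1) :=
    hffall m ▸ integrable_sum_mul_pow_gaussianReal 0 1 _ _
  have hdff : (fun x => dff lam x n) = fun x => ∑ m ∈ range (n + 1), St2 n m * ffall x m :=
    funext fun x => hSt2 x n
  calc (∫ ω, dff lam (Y ω) n ∂μ) = ∫ x, dff lam x n ∂gaussianReal 0 1 := by
        rw [← hYlaw, integral_map hY.aemeasurable]
        exact (continuous_finsetProd _ fun i _ => by fun_prop).aestronglyMeasurable
    _ = ∑ m ∈ range (n + 1), St2 n m * ∫ x, ffall x m ∂gaussianReal 0 1 := by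
        rw [hdff, integral_finsetSum _ fun m _ => (hint m).const_mul _]
        simp_rw [integral_const_mul]
    _ = ∑ m ∈ range (n + 1), St2 n m *
          ∑ k ∈ range (m / 2 + 1), S1 m (2 * k) * ((2 * k)! / (2 ^ k * k !)) := by
        simp_rw [hffall, integral_sum_mul_pow_gaussianReal, NNReal.coe_one, one_pow, one_mul]
    _ = _ := by
        simp_rw [mul_sum]
        refine (sum_comm' fun m k => ?_).trans
          (sum_congr rfl fun k _ => sum_congr rfl fun m _ => ?_)
        · simp only [mem_range, mem_Icc]
          omega
        · ring

theorem gaussian_moment_eq_sum {Ω : Type*} [MeasurableSpace Ω] (μ : MeasureTheory.Measure Ω)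
    [MeasureTheory.IsProbabilityMeasure μ] (Y : Ω → ℝ) (hY : Measurable Y)
    (hYlaw : μ.map Y = ProbabilityTheory.gaussianReal 0 1)
    (lam : ℝ) (hlam : lam ≠ 0)
    (S1 : ℕ → ℕ → ℝ)
    (hS1 : ∀ (x : ℝ) (n : ℕ), ffall x n = ∑ k ∈ Finset.range (n + 1), S1 n k * x ^ k)
    (St2 : ℕ → ℕ → ℝ)
    (hSt2 : ∀ (x : ℝ) (n : ℕ),
      dff lam x n = ∑ k ∈ Finset.range (n + 1), St2 n k * ffall x k)
    (n : ℕ) :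
    (∫ ω, dff lam (Y ω) n ∂μ) =
      ∑ k ∈ Finset.range (n / 2 + 1), ∑ m ∈ Finset.Icc (2 * k) n,
        ((2 * k).factorial : ℝ) / (2 ^ k * (k.factorial : ℝ)) * S1 m (2 * k) * St2 n m :=
  gaussian_moment_eq_sum_general μ Y hY hYlaw lam S1 hS1 St2 hSt2 n
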